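/- arXiv:2202.11662 — 2 statements merged into one kernel-verified Lean document; each statement's English description precedes it below -/
import Mathlib

section
/- Let α ∈ (0,2], C > 0 and θ₀ ∈ [0,∞). If h(λr) ≤ C λ^{−α} h(r) for all λ ∈ (0,1] and all r > 0 with r < 1/θ₀ (all r > 0 if θ₀ = 0), then ψ* ∈ WUSC(α, θ₀, 16(1+2d) C), i.e. ψ*(λθ) ≤ 16(1+2d) C λ^α ψ*(θ) for all λ ≥ 1 and θ > θ₀. -/
open MeasureTheory Real Filter Topology
open scoped ENNReal NNReal

noncomputable section

/-- Euclidean space `ℝ^d`. -/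
abbrev Rd (d : ℕ) := EuclideanSpace ℝ (Fin d)

/-- `ν` is a Lévy measure: `ν({0}) = 0` and `∫ min(1,|z|) ν(dz) < ∞`. -/
def LevyMeasure {d : ℕ} (ν : Measure (Rd d)) : Prop :=
  ν {0} = 0 ∧ (∫⁻ z, ENNReal.ofReal (min 1 ‖z‖) ∂ν) < ∞

/-- The symbol `ψ(ξ) = ∫ (1 - e^{i⟨ξ,z⟩}) ν(dz)`. -/
def psiSymb {d : ℕ} (ν : Measure (Rd d)) (ξ : Rd d) : ℂ :=
  ∫ z, (1 - Complex.exp (Complex.I * ((inner ℝ ξ z : ℝ) : ℂ))) ∂ν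

/-- `ψ*(r) = sup_{|ξ| ≤ r} Re ψ(ξ)`. -/
def psiStar {d : ℕ} (ν : Measure (Rd d)) (r : ℝ) : ℝ :=
  sSup {u | ∃ ξ : Rd d, ‖ξ‖ ≤ r ∧ u = (psiSymb ν ξ).re}

/-- The concentration function `h(r) = ∫ min(1, |x|²/r²) ν(dx)`. -/
def hFn {d : ℕ} (ν : Measure (Rd d)) (r : ℝ) : ℝ :=
  ∫ x, min 1 (‖x‖ ^ 2 / r ^ 2) ∂ν

/-- Weak upper scaling condition at infinity: `φ(λθ) ≤ C̄ λ^α φ(θ)` for `λ ≥ 1`, `θ > θ₀`. -/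
def WUSC (α θ₀ Cb : ℝ) (φ : ℝ → ℝ) : Prop :=
  ∀ lam ≥ (1 : ℝ), ∀ θ > θ₀, φ (lam * θ) ≤ Cb * lam ^ α * φ θ

/-- The set of Hölder quotients `|f x - f y| / |x - y|^β` over `0 < |x-y| ≤ 1`. -/
def holderSet {d : ℕ} (β : ℝ) (f : Rd d → ℝ) : Set ℝ :=
  {q | ∃ x y : Rd d, x ≠ y ∧ dist x y ≤ 1 ∧ q = |f x - f y| / dist x y ^ β}

/-- The Hölder seminorm `⦀f⦀_β`. -/
def holderSemi {d : ℕ} (β : ℝ) (f : Rd d → ℝ) : ℝ := sSup (holderSet β f)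

/-- The supremum norm `‖f‖_∞`. -/
def supNorm {d : ℕ} (f : Rd d → ℝ) : ℝ := ⨆ x, |f x|

/-- `f ∈ C₀^β`: continuous, vanishing at infinity, with finite Hölder seminorm. -/
def memC0beta {d : ℕ} (β : ℝ) (f : Rd d → ℝ) : Prop :=
  Continuous f ∧ Tendsto f (cocompact (Rd d)) (𝓝 0) ∧ BddAbove (holderSet β f)

/-- `‖f‖_β = ⦀f⦀_β + ‖f‖_∞`. -/
def holderNorm {d : ℕ} (β : ℝ) (f : Rd d → ℝ) : ℝ := holderSemi β f + supNorm f

/-- The generator `L f(x) = ∫ (f(x+y) - f(x)) ν(dy)`. -/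
def Lop {d : ℕ} (ν : Measure (Rd d)) (f : Rd d → ℝ) (x : Rd d) : ℝ :=
  ∫ y, (f (x + y) - f x) ∂ν

/-- The covariance function `g_Ω(y) = |Ω ∩ (Ω + y)|`. -/
def covFn {d : ℕ} (Ω : Set (Rd d)) (y : Rd d) : ℝ :=
  (volume (Ω ∩ ((fun z => z + y) '' Ω))).toReal

/-- The set of values `∫_Ω div φ` over `C¹` compactly supported `φ` with `‖φ‖_∞ ≤ 1`. -/
def perSet {d : ℕ} (Ω : Set (Rd d)) : Set ℝ :=
  {r | ∃ φ : Rd d → Rd d, ContDiff ℝ 1 φ ∧ HasCompactSupport φ ∧ (∀ x, ‖φ x‖ ≤ 1) ∧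
    r = ∫ x in Ω, (∑ i, fderiv ℝ φ x (EuclideanSpace.single i 1) i)}

/-- The classical perimeter `Per(Ω)`. -/
def per {d : ℕ} (Ω : Set (Rd d)) : ℝ := sSup (perSet Ω)

/-- The nonlocal perimeter `Per_ν(Ω) = ∫ (g_Ω(0) - g_Ω(y)) ν(dy)`. -/
def perNu {d : ℕ} (ν : Measure (Rd d)) (Ω : Set (Rd d)) : ℝ :=
  ∫ y, (covFn Ω 0 - covFn Ω y) ∂ν

/-- The heat content remainder `H(t) = ∫ (g_Ω(0) - g_Ω(y)) p_t(dy)`. -/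
def heatRem {d : ℕ} (Ω : Set (Rd d)) (p : ℝ → Measure (Rd d)) (t : ℝ) : ℝ :=
  ∫ y, (covFn Ω 0 - covFn Ω y) ∂(p t)

/-- The characteristic function of a measure `μ` on `ℝ^d`. -/
def charFn {d : ℕ} (μ : Measure (Rd d)) (ξ : Rd d) : ℂ :=
  ∫ x, Complex.exp (Complex.I * ((inner ℝ ξ x : ℝ) : ℂ)) ∂μ

/-- The isotropic `α`-stable Lévy measure `ν^{(α)}(dz) = A_{d,-α} |z|^{-d-α} dz`. -/
def stableLevy (d : ℕ) (α : ℝ) : Measure (Rd d) :=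
  volume.withDensity fun z => ENNReal.ofReal
    ((2 ^ α * Real.Gamma (((d : ℝ) + α) / 2) /
      (Real.pi ^ ((d : ℝ) / 2) * |Real.Gamma (-(α / 2))|)) * ‖z‖ ^ (-(d : ℝ) - α))

/-!
The bound `ψ*(r) ≤ 2 h(1/r)` is pointwise: `1 - cos ⟪ξ, z⟫ ≤ 2 min(1, r²|z|²)` when
`|ξ| ≤ r`. For the reverse bound `h(1/r) ≤ 10 d ψ*(r)`, average `Re ψ` over the segments
`[-r, r] • e_j` along the coordinate axes: by Fubini, the mean of `1 - cos (t z_j)` over `t` is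
`1 - sinc (r z_j) ≥ min(1, r² z_j²) / 10`, and summing over `j` recovers
`min(1, r²|z|²) / 10`. Chaining both bounds through the scaling hypothesis on `h` gives
`ψ*(λθ) ≤ 20 d C λ^α ψ*(θ)`.
-/
theorem min_one_mul_le_max_mul_min_one {a x : ℝ} (hx : 0 ≤ x) :
    min 1 (a * x) ≤ max 1 a * min 1 x := by
  rcases le_total 1 x with h | h
  · rw [min_eq_left h, mul_one]
    exact (min_le_left _ _).trans (le_max_left _ _)
  · rw [min_eq_right h]
    exact (min_le_right _ _).trans (mul_le_mul_of_nonneg_right (le_max_right _ _) hx)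

theorem min_one_sq_le_min_one_abs (y : ℝ) : min 1 (y ^ 2) ≤ min 1 |y| := by
  rcases le_total |y| 1 with h | h
  · rw [← sq_abs]
    exact min_le_min le_rfl (by nlinarith [abs_nonneg y])
  · exact (min_le_left _ _).trans (le_min le_rfl h)

theorem min_one_sum_le_sum_min_one {ι : Type*} (s : Finset ι) {a : ι → ℝ}
    (ha : ∀ i ∈ s, 0 ≤ a i) : min 1 (∑ i ∈ s, a i) ≤ ∑ i ∈ s, min 1 (a i) := by
  by_cases hle : ∀ i ∈ s, a i ≤ 1
  · rw [Finset.sum_congr rfl fun i hi => min_eq_right (hle i hi)]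
    exact min_le_right _ _
  · push Not at hle
    obtain ⟨i, hi, h1⟩ := hle
    calc min 1 (∑ i ∈ s, a i) ≤ min 1 (a i) :=
          (min_le_left _ _).trans_eq (min_eq_left h1.le).symm
      _ ≤ ∑ i ∈ s, min 1 (a i) :=
        Finset.single_le_sum (fun j hj => le_min zero_le_one (ha j hj)) hi

theorem one_sub_cos_le_two_mul_min (t : ℝ) : 1 - cos t ≤ 2 * min 1 (t ^ 2) := by
  rcases le_total 1 (t ^ 2) with h | h
  · rw [min_eq_left h]; linarith [neg_one_le_cos t]
  · rw [min_eq_right h]; linarith [one_sub_sq_div_two_le_cos (x := t), sq_nonneg t]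

theorem norm_one_sub_exp_I_mul_le (t : ℝ) :
    ‖1 - Complex.exp (Complex.I * t)‖ ≤ 2 * min 1 |t| := by
  rw [norm_sub_rev]
  rcases le_total 1 |t| with h | h
  · rw [min_eq_left h]
    calc ‖Complex.exp (Complex.I * t) - 1‖ ≤ ‖Complex.exp (Complex.I * t)‖ + ‖(1 : ℂ)‖ :=
          norm_sub_le _ _
      _ = 2 * 1 := by rw [Complex.norm_exp_I_mul_ofReal, norm_one]; norm_num
  · rw [min_eq_right h]
    have := Real.norm_exp_I_mul_ofReal_sub_one_le (x := t)
    rw [Real.norm_eq_abs] at this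
    linarith [abs_nonneg t]

theorem min_one_sq_div_ten_le_one_sub_sinc (x : ℝ) : min 1 (x ^ 2) / 10 ≤ 1 - sinc x := by
  wlog hx : 0 < x generalizing x
  · rcases (not_lt.1 hx).lt_or_eq with hneg | rfl
    · simpa [sinc_neg] using this (-x) (neg_pos.2 hneg)
    · simp
  rw [sinc_of_ne_zero hx.ne']
  rcases le_total x 1 with h1 | h1
  · -- Taylor: `sin x ≤ x - x³/6 + x⁵/100 ≤ x - x³/10` on `[0, 1]`.
    have hb := (abs_le.1 (sin_bound (x := x) (by rwa [abs_of_pos hx]))).2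
    rw [abs_of_pos hx] at hb
    have h53 : x ^ 5 ≤ x ^ 3 := pow_le_pow_of_le_one hx.le h1 (by norm_num)
    have : sin x ≤ x - x ^ 3 / 10 := by nlinarith [pow_pos hx 3]
    rw [min_eq_right (by nlinarith), le_sub_comm, div_le_iff₀ hx]
    nlinarith
  · rw [min_eq_left (by nlinarith)]
    suffices sin x ≤ 9 / 10 * x by
      rw [le_sub_comm, div_le_iff₀ hx]; linarith
    rcases le_total (10 / 9) x with h2 | h2
    · linarith [sin_le_one x]
    · -- `sin 1 ≤ 1 - 1/6 + 1/100` and `sin` is 1-Lipschitz.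
      have h1' := (abs_le.1 (sin_bound (x := 1) (by norm_num))).2
      have hlip := (abs_le.1 (abs_sin_sub_sin_le x 1)).2
      rw [abs_of_nonneg (by linarith)] at hlip
      norm_num at h1'
      linarith

theorem intervalIntegral_cos_mul (r c : ℝ) :
    ∫ t in -r..r, cos (t * c) = 2 * r * sinc (r * c) := by
  rcases eq_or_ne c 0 with rfl | hc
  · simp; ring
  rw [intervalIntegral.integral_comp_mul_right _ hc, integral_cos]
  rcases eq_or_ne r 0 with rfl | hr
  · simp
  rw [sinc_of_ne_zero (mul_ne_zero hr hc), neg_mul, sin_neg, smul_eq_mul]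
  field_simp
  ring

theorem intervalIntegral_one_sub_cos_mul (r c : ℝ) :
    ∫ t in -r..r, (1 - cos (t * c)) = 2 * r * (1 - sinc (r * c)) := by
  have hcos : Continuous fun t => cos (t * c) := by fun_prop
  rw [intervalIntegral.integral_sub intervalIntegrable_const (hcos.intervalIntegrable _ _),
    intervalIntegral_cos_mul]
  simp; ring

theorem min_one_sq_mul_norm_le_sum_one_sub_sinc {d : ℕ} (r : ℝ) (z : Rd d) :
    min 1 ((r * ‖z‖) ^ 2) ≤ 10 * ∑ j, (1 - sinc (r * z j)) := by
  calc min 1 ((r * ‖z‖) ^ 2) = min 1 (∑ j, (r * z j) ^ 2) := by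
        simp only [mul_pow, EuclideanSpace.real_norm_sq_eq, Finset.mul_sum]
    _ ≤ ∑ j, min 1 ((r * z j) ^ 2) := min_one_sum_le_sum_min_one _ fun j _ => sq_nonneg _
    _ ≤ ∑ j, 10 * (1 - sinc (r * z j)) := Finset.sum_le_sum fun j _ => by
        linarith [min_one_sq_div_ten_le_one_sub_sinc (r * z j)]
    _ = 10 * ∑ j, (1 - sinc (r * z j)) := (Finset.mul_sum _ _ _).symm

theorem hFn_inv {d : ℕ} (ν : Measure (Rd d)) (r : ℝ) :
    hFn ν r⁻¹ = ∫ z, min 1 ((r * ‖z‖) ^ 2) ∂ν := by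
  simp only [hFn, inv_pow, div_inv_eq_mul, mul_pow, mul_comm]

namespace LevyMeasure

variable {d : ℕ} {ν : Measure (Rd d)}

theorem integrable_min_one_norm (hν : LevyMeasure ν) :
    Integrable (fun z => min 1 ‖z‖) ν := by
  refine ⟨by fun_prop, ?_⟩
  rw [hasFiniteIntegral_iff_ofReal (ae_of_all _ fun z => le_min zero_le_one (norm_nonneg z))]
  exact hν.2

theorem integrable_min_one_sq_mul_norm (hν : LevyMeasure ν) (c : ℝ) :
    Integrable (fun z => min 1 ((c * ‖z‖) ^ 2)) ν := by
  refine (hν.integrable_min_one_norm.const_mul (max 1 |c|)).mono' (by fun_prop)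
    (ae_of_all _ fun z => ?_)
  rw [Real.norm_of_nonneg (le_min zero_le_one (sq_nonneg _))]
  calc min 1 ((c * ‖z‖) ^ 2) ≤ min 1 (|c| * ‖z‖) := by
        simpa [abs_mul] using min_one_sq_le_min_one_abs (c * ‖z‖)
    _ ≤ max 1 |c| * min 1 ‖z‖ := min_one_mul_le_max_mul_min_one (norm_nonneg z)

-- `ν` is the finite measure `ν.withDensity f` reweighted by the `ν`-a.e. finite density `f⁻¹`.
theorem sigmaFinite (hν : LevyMeasure ν) : SigmaFinite ν := by
  set f : Rd d → ℝ≥0∞ := fun z => ENNReal.ofReal (min 1 ‖z‖)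
  have hf0 : ∀ᵐ z ∂ν, f z ≠ 0 := by
    filter_upwards [measure_eq_zero_iff_ae_notMem.1 hν.1] with z hz
    simpa [f] using hz
  have : IsFiniteMeasure (ν.withDensity f) := isFiniteMeasure_withDensity hν.2.ne
  have : SigmaFinite ((ν.withDensity f).withDensity fun z => (f z)⁻¹) :=
    SigmaFinite.withDensity_of_ne_top <|
      (withDensity_absolutelyContinuous ν f).ae_le
        (hf0.mono fun z hz => ENNReal.inv_ne_top.2 hz)
  rwa [withDensity_inv_same (by fun_prop) hf0 (ae_of_all _ fun _ => ENNReal.ofReal_ne_top)] at this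

theorem integrable_one_sub_exp_inner (hν : LevyMeasure ν) (ξ : Rd d) :
    Integrable (fun z => 1 - Complex.exp (Complex.I * ((inner ℝ ξ z : ℝ) : ℂ))) ν := by
  refine (hν.integrable_min_one_norm.const_mul (2 * max 1 ‖ξ‖)).mono' (by fun_prop)
    (ae_of_all _ fun z => ?_)
  calc ‖1 - Complex.exp (Complex.I * ((inner ℝ ξ z : ℝ) : ℂ))‖
      ≤ 2 * min 1 |inner ℝ ξ z| := norm_one_sub_exp_I_mul_le _
    _ ≤ 2 * min 1 (‖ξ‖ * ‖z‖) := by gcongr; exact abs_real_inner_le_norm ξ z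
    _ ≤ 2 * max 1 ‖ξ‖ * min 1 ‖z‖ := by
      rw [mul_assoc]; gcongr; exact min_one_mul_le_max_mul_min_one (norm_nonneg z)

theorem re_psiSymb (hν : LevyMeasure ν) (ξ : Rd d) :
    (psiSymb ν ξ).re = ∫ z, (1 - cos (inner ℝ ξ z)) ∂ν := by
  rw [psiSymb, ← RCLike.re_to_complex, ← integral_re (hν.integrable_one_sub_exp_inner ξ)]
  simp_rw [RCLike.re_to_complex, Complex.sub_re, Complex.one_re, mul_comm Complex.I,
    Complex.exp_ofReal_mul_I_re]

theorem re_psiSymb_single (hν : LevyMeasure ν) (j : Fin d) (t : ℝ) :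
    (psiSymb ν (EuclideanSpace.single j t)).re = ∫ z, (1 - cos (t * z j)) ∂ν := by
  simp [hν.re_psiSymb, EuclideanSpace.inner_single_left]

theorem re_psiSymb_le_two_mul_hFn_inv (hν : LevyMeasure ν) {ξ : Rd d} {r : ℝ} (hξ : ‖ξ‖ ≤ r) :
    (psiSymb ν ξ).re ≤ 2 * hFn ν r⁻¹ := by
  rw [hν.re_psiSymb, hFn_inv, ← integral_const_mul]
  refine integral_mono_of_nonneg (ae_of_all _ fun z => sub_nonneg.2 (cos_le_one _))
    ((hν.integrable_min_one_sq_mul_norm r).const_mul 2) (ae_of_all _ fun z => ?_)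
  refine (one_sub_cos_le_two_mul_min _).trans ?_
  change _ ≤ 2 * min 1 ((r * ‖z‖) ^ 2)
  rw [← sq_abs (inner ℝ ξ z)]
  gcongr
  exact (abs_real_inner_le_norm ξ z).trans (by gcongr)

theorem bddAbove_re_psiSymb (hν : LevyMeasure ν) (r : ℝ) :
    BddAbove {u | ∃ ξ : Rd d, ‖ξ‖ ≤ r ∧ u = (psiSymb ν ξ).re} :=
  ⟨2 * hFn ν r⁻¹, by rintro _ ⟨ξ, hξ, rfl⟩; exact hν.re_psiSymb_le_two_mul_hFn_inv hξ⟩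

theorem re_psiSymb_le_psiStar (hν : LevyMeasure ν) {ξ : Rd d} {r : ℝ} (hξ : ‖ξ‖ ≤ r) :
    (psiSymb ν ξ).re ≤ psiStar ν r :=
  le_csSup (hν.bddAbove_re_psiSymb r) ⟨ξ, hξ, rfl⟩

theorem psiStar_nonneg (hν : LevyMeasure ν) {r : ℝ} (hr : 0 ≤ r) : 0 ≤ psiStar ν r := by
  simpa [psiSymb] using hν.re_psiSymb_le_psiStar (ξ := 0) (by simpa using hr)

theorem psiStar_le_two_mul_hFn_inv (hν : LevyMeasure ν) {r : ℝ} (hr : 0 ≤ r) :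
    psiStar ν r ≤ 2 * hFn ν r⁻¹ :=
  csSup_le ⟨0, 0, by simpa using hr, by simp [psiSymb]⟩ fun _ ⟨_, hξ, hu⟩ =>
    hu ▸ hν.re_psiSymb_le_two_mul_hFn_inv hξ

theorem integrable_one_sub_cos_mul_apply_prod (hν : LevyMeasure ν) (r : ℝ) (j : Fin d) :
    Integrable (fun p : ℝ × Rd d => 1 - cos (p.1 * p.2 j))
      ((volume.restrict (Set.Ioc (-r) r)).prod ν) := by
  have := hν.sigmaFinite
  refine (((hν.integrable_min_one_sq_mul_norm r).const_mul 2).comp_snd _).mono' (by fun_prop) ?_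
  filter_upwards [Measure.quasiMeasurePreserving_fst.ae (ae_restrict_mem measurableSet_Ioc)]
    with p hp
  rw [Real.norm_of_nonneg (sub_nonneg.2 (cos_le_one _))]
  refine (one_sub_cos_le_two_mul_min _).trans ?_
  have ht : |p.1| ≤ r := abs_le.2 ⟨hp.1.le, hp.2⟩
  have hz : |p.2 j| ≤ ‖p.2‖ := by simpa using PiLp.norm_apply_le p.2 j
  have hr : 0 ≤ r := (abs_nonneg _).trans ht
  rw [← sq_abs (p.1 * p.2 j), abs_mul]
  gcongr

theorem integral_integral_one_sub_cos_le (hν : LevyMeasure ν) {r : ℝ} (hr : 0 ≤ r) (j : Fin d) :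
    ∫ z, (∫ t in Set.Ioc (-r) r, (1 - cos (t * z j))) ∂ν ≤ 2 * r * psiStar ν r := by
  have := hν.sigmaFinite
  calc ∫ z, (∫ t in Set.Ioc (-r) r, (1 - cos (t * z j))) ∂ν
      = ∫ t in Set.Ioc (-r) r, ∫ z, (1 - cos (t * z j)) ∂ν :=
        (integral_integral_swap (hν.integrable_one_sub_cos_mul_apply_prod r j)).symm
    _ ≤ ∫ _ in Set.Ioc (-r) r, psiStar ν r := by
        refine integral_mono_of_nonneg
          (ae_of_all _ fun t => integral_nonneg fun z => sub_nonneg.2 (cos_le_one _))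
          (integrable_const _) ?_
        filter_upwards [ae_restrict_mem measurableSet_Ioc] with t ht
        rw [← hν.re_psiSymb_single]
        exact hν.re_psiSymb_le_psiStar (by simpa using abs_le.2 ⟨ht.1.le, ht.2⟩)
    _ = 2 * r * psiStar ν r := by
        simp only [integral_const, smul_eq_mul, measureReal_restrict_apply_univ,
          Real.volume_real_Ioc]
        rw [max_eq_left (by linarith)]
        ring

theorem hFn_inv_le_psiStar (hν : LevyMeasure ν) {r : ℝ} (hr : 0 < r) :
    hFn ν r⁻¹ ≤ 10 * d * psiStar ν r := by
  have := hν.sigmaFinite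
  have hF := hν.integrable_one_sub_cos_mul_apply_prod r
  have hinner (j : Fin d) (z : Rd d) :
      ∫ t in Set.Ioc (-r) r, (1 - cos (t * z j)) = 2 * r * (1 - sinc (r * z j)) := by
    rw [← intervalIntegral.integral_of_le (by linarith), intervalIntegral_one_sub_cos_mul]
  have key : r / 5 * hFn ν r⁻¹ ≤ r / 5 * (10 * d * psiStar ν r) := calc
    r / 5 * hFn ν r⁻¹ = ∫ z, r / 5 * min 1 ((r * ‖z‖) ^ 2) ∂ν := by
      rw [hFn_inv, integral_const_mul]
    _ ≤ ∫ z, (∑ j, ∫ t in Set.Ioc (-r) r, (1 - cos (t * z j))) ∂ν := by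
      refine integral_mono ((hν.integrable_min_one_sq_mul_norm r).const_mul _)
        (integrable_finsetSum _ fun j _ => (hF j).integral_prod_right) fun z => ?_
      simp only [hinner, ← Finset.mul_sum]
      linarith [mul_le_mul_of_nonneg_left (min_one_sq_mul_norm_le_sum_one_sub_sinc r z)
        (by positivity : 0 ≤ r / 5)]
    _ = ∑ j, ∫ z, (∫ t in Set.Ioc (-r) r, (1 - cos (t * z j))) ∂ν :=
      integral_finsetSum _ fun j _ => (hF j).integral_prod_right
    _ ≤ ∑ _j : Fin d, 2 * r * psiStar ν r :=
      Finset.sum_le_sum fun j _ => hν.integral_integral_one_sub_cos_le hr.le j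
    _ = r / 5 * (10 * d * psiStar ν r) := by simp; ring
  exact le_of_mul_le_mul_left key (by positivity)

end LevyMeasure

theorem stmt1_general {d : ℕ} (ν : Measure (Rd d)) (hν : LevyMeasure ν)
    (α C θ₀ : ℝ) (hC : 0 < C) (hθ₀ : 0 ≤ θ₀)
    (hh : ∀ lam : ℝ, 0 < lam → lam ≤ 1 → ∀ r : ℝ, 0 < r → θ₀ * r < 1 →
      hFn ν (lam * r) ≤ C * lam ^ (-α) * hFn ν r) :
    WUSC α θ₀ (16 * (1 + 2 * (d : ℝ)) * C) (psiStar ν) := by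
  intro lam hlam θ hθ
  have hθ0 : 0 < θ := hθ₀.trans_lt hθ
  have hlam0 : 0 < lam := one_pos.trans_le hlam
  have hscale : hFn ν (lam * θ)⁻¹ ≤ C * lam ^ α * hFn ν θ⁻¹ := by
    have := hh lam⁻¹ (inv_pos.2 hlam0) (inv_le_one_of_one_le₀ hlam) θ⁻¹ (inv_pos.2 hθ0)
      (by rwa [← div_eq_mul_inv, div_lt_one hθ0])
    rwa [Real.inv_rpow hlam0.le, Real.rpow_neg hlam0.le, inv_inv, ← mul_inv] at this
  calc psiStar ν (lam * θ) ≤ 2 * hFn ν (lam * θ)⁻¹ := hν.psiStar_le_two_mul_hFn_inv (by positivity)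
    _ ≤ 2 * (C * lam ^ α * hFn ν θ⁻¹) := by gcongr
    _ ≤ 2 * (C * lam ^ α * (10 * d * psiStar ν θ)) := by
      gcongr; exact hν.hFn_inv_le_psiStar hθ0
    _ ≤ 16 * (1 + 2 * d) * C * lam ^ α * psiStar ν θ := by
      have : 0 ≤ C * lam ^ α * psiStar ν θ :=
        mul_nonneg (by positivity) (hν.psiStar_nonneg hθ0.le)
      nlinarith

/-- If `h(λr) ≤ C λ^{-α} h(r)` for all `λ ∈ (0,1]` and `r > 0` with `θ₀ r < 1`
(all `r > 0` if `θ₀ = 0`), then `ψ* ∈ WUSC(α, θ₀, 16(1+2d) C)`. -/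
theorem stmt1 {d : ℕ} (hd : 1 ≤ d) (ν : Measure (Rd d)) (hν : LevyMeasure ν)
    (α C θ₀ : ℝ) (hα : α ∈ Set.Ioc (0 : ℝ) 2) (hC : 0 < C) (hθ₀ : 0 ≤ θ₀)
    (hh : ∀ lam : ℝ, 0 < lam → lam ≤ 1 → ∀ r : ℝ, 0 < r → θ₀ * r < 1 →
      hFn ν (lam * r) ≤ C * lam ^ (-α) * hFn ν r) :
    WUSC α θ₀ (16 * (1 + 2 * (d : ℝ)) * C) (psiStar ν) :=
  stmt1_general ν hν α C θ₀ hC hθ₀ hh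
end
end

section
/- Let α ∈ (0,2], C > 0 and θ₀ ∈ [0,1). Assume h(λr) ≤ C λ^{−α} h(r) for all λ ∈ (0,1] and all r > 0 with r < 1/θ₀. Then for every ε > 0, ∫_{|y|<1} |y|^{α+ε} ν(dy) ≤ C (α+ε) ε^{−1} h(1) < ∞. -/
open MeasureTheory Real Filter Topology
open scoped ENNReal NNReal

noncomputable section

/-!
The tail `ν{|y| > t}` is dominated by `h(t)` (Markov), and the scaling hypothesis with `r = 1`
gives `h(t) ≤ C t^{-α} h(1)` for `t < 1`. A weak-`L^α` tail bound on the unit ball yields an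
`L^{α+ε}` bound by the layer-cake formula, since `∫₀¹ t^{-α} · (α+ε) t^{α+ε-1} dt = (α+ε)/ε`.
-/

theorem lintegral_Ioc_rpow_sub_one {ε : ℝ} (hε : 0 < ε) :
    ∫⁻ t in Set.Ioc (0 : ℝ) 1, ENNReal.ofReal (t ^ (ε - 1)) = ENNReal.ofReal (1 / ε) := by
  have hint : IntegrableOn (fun t : ℝ => t ^ (ε - 1)) (Set.Ioc 0 1) :=
    (intervalIntegral.intervalIntegrable_rpow' (by linarith)).1
  rw [← ofReal_integral_eq_lintegral_ofReal hint
      (ae_restrict_of_forall_mem measurableSet_Ioc fun t ht => rpow_nonneg ht.1.le _),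
    ← intervalIntegral.integral_of_le zero_le_one, integral_rpow (Or.inl (by linarith)),
    sub_add_cancel, one_rpow, zero_rpow hε.ne', sub_zero]

theorem lintegral_rpow_le_of_meas_lt_le {Ω : Type*} [MeasurableSpace Ω] {μ : Measure Ω}
    {f : Ω → ℝ} (hf_nn : 0 ≤ᵐ[μ] f) (hf_le : ∀ᵐ x ∂μ, f x ≤ 1) (hf : AEMeasurable f μ)
    {α K ε : ℝ} (hK : 0 ≤ K) (hε : 0 < ε) (hp : 0 < α + ε)
    (htail : ∀ t, 0 < t → t < 1 → μ {x | t < f x} ≤ ENNReal.ofReal (K * t ^ (-α))) :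
    ∫⁻ x, ENNReal.ofReal (f x ^ (α + ε)) ∂μ ≤ ENNReal.ofReal (K * (α + ε) / ε) := by
  have hbound : ∀ t ∈ Set.Ioi (0 : ℝ),
      μ {x | t < f x} * ENNReal.ofReal (t ^ (α + ε - 1)) ≤
        (Set.Ioc 0 1).indicator (fun t => ENNReal.ofReal K * ENNReal.ofReal (t ^ (ε - 1))) t := by
    intro t (ht : 0 < t)
    rcases lt_or_ge t 1 with ht1 | ht1
    · rw [Set.indicator_of_mem (show t ∈ Set.Ioc 0 1 from ⟨ht, ht1.le⟩), ← ENNReal.ofReal_mul hK]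
      calc μ {x | t < f x} * ENNReal.ofReal (t ^ (α + ε - 1))
          ≤ ENNReal.ofReal (K * t ^ (-α)) * ENNReal.ofReal (t ^ (α + ε - 1)) := by
            gcongr; exact htail t ht ht1
        _ = ENNReal.ofReal (K * t ^ (ε - 1)) := by
            rw [← ENNReal.ofReal_mul (by positivity), mul_assoc, ← rpow_add ht]
            ring_nf
    · have hnull : μ {x | t < f x} = 0 :=
        measure_mono_null (fun x hx => not_le.2 (ht1.trans_lt hx)) (ae_iff.1 hf_le)
      rw [hnull, zero_mul]
      exact zero_le
  calc ∫⁻ x, ENNReal.ofReal (f x ^ (α + ε)) ∂μ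
      = ENNReal.ofReal (α + ε) *
          ∫⁻ t in Set.Ioi 0, μ {x | t < f x} * ENNReal.ofReal (t ^ (α + ε - 1)) :=
        lintegral_rpow_eq_lintegral_meas_lt_mul μ hf_nn hf hp
    _ ≤ ENNReal.ofReal (α + ε) * ∫⁻ t in Set.Ioi 0,
          (Set.Ioc 0 1).indicator (fun t => ENNReal.ofReal K * ENNReal.ofReal (t ^ (ε - 1))) t :=
        mul_le_mul_right (setLIntegral_mono' measurableSet_Ioi hbound) _
    _ = ENNReal.ofReal (α + ε) * (ENNReal.ofReal K * ENNReal.ofReal (1 / ε)) := by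
        rw [lintegral_indicator measurableSet_Ioc, Measure.restrict_restrict measurableSet_Ioc,
          Set.inter_eq_self_of_subset_left Set.Ioc_subset_Ioi_self,
          lintegral_const_mul' _ _ ENNReal.ofReal_ne_top, lintegral_Ioc_rpow_sub_one hε]
    _ = ENNReal.ofReal (K * (α + ε) / ε) := by
        rw [← ENNReal.ofReal_mul hK, ← ENNReal.ofReal_mul hp.le]
        ring_nf

theorem min_one_sq_div_sq_le {a : ℝ} (ha : 0 ≤ a) (r : ℝ) :
    min 1 (a ^ 2 / r ^ 2) ≤ max 1 (r ^ 2)⁻¹ * min 1 a := by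
  rcases le_or_gt 1 a with h | h
  · rw [min_eq_left h, mul_one]
    exact (min_le_left _ _).trans (le_max_left _ _)
  · rw [min_eq_right h.le]
    calc min 1 (a ^ 2 / r ^ 2) ≤ (r ^ 2)⁻¹ * (a * a) := by
          rw [← sq, ← div_eq_inv_mul]; exact min_le_right _ _
      _ ≤ max 1 (r ^ 2)⁻¹ * (1 * a) := by gcongr; exact le_max_right _ _
      _ = max 1 (r ^ 2)⁻¹ * a := by rw [one_mul]

theorem lintegral_min_one_sq_div_sq_lt_top {E : Type*} [NormedAddCommGroup E] [MeasurableSpace E]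
    {μ : Measure E} (hμ : ∫⁻ z, ENNReal.ofReal (min 1 ‖z‖) ∂μ < ∞) (r : ℝ) :
    ∫⁻ x, ENNReal.ofReal (min 1 (‖x‖ ^ 2 / r ^ 2)) ∂μ < ∞ :=
  calc ∫⁻ x, ENNReal.ofReal (min 1 (‖x‖ ^ 2 / r ^ 2)) ∂μ
      ≤ ∫⁻ x, ENNReal.ofReal (max 1 (r ^ 2)⁻¹) * ENNReal.ofReal (min 1 ‖x‖) ∂μ :=
        lintegral_mono fun x => by
          rw [← ENNReal.ofReal_mul (zero_le_one.trans (le_max_left _ _))]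
          exact ENNReal.ofReal_le_ofReal (min_one_sq_div_sq_le (norm_nonneg x) r)
    _ = ENNReal.ofReal (max 1 (r ^ 2)⁻¹) * ∫⁻ x, ENNReal.ofReal (min 1 ‖x‖) ∂μ :=
        lintegral_const_mul' _ _ ENNReal.ofReal_ne_top
    _ < ∞ := ENNReal.mul_lt_top ENNReal.ofReal_lt_top hμ

theorem hFn_nonneg {d : ℕ} (ν : Measure (Rd d)) (r : ℝ) : 0 ≤ hFn ν r :=
  integral_nonneg fun _ => le_min zero_le_one (by positivity)

section hFn

variable {d : ℕ} {ν : Measure (Rd d)}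

theorem ofReal_hFn (hν : ∫⁻ z, ENNReal.ofReal (min 1 ‖z‖) ∂ν < ∞) (r : ℝ) :
    ENNReal.ofReal (hFn ν r) = ∫⁻ x, ENNReal.ofReal (min 1 (‖x‖ ^ 2 / r ^ 2)) ∂ν := by
  rw [hFn, integral_eq_lintegral_of_nonneg_ae
      (Eventually.of_forall fun _ => le_min zero_le_one (by positivity)) (by fun_prop),
    ENNReal.ofReal_toReal (lintegral_min_one_sq_div_sq_lt_top hν r).ne]

theorem meas_norm_gt_le_hFn (hν : ∫⁻ z, ENNReal.ofReal (min 1 ‖z‖) ∂ν < ∞) {t : ℝ}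
    (ht : 0 < t) : ν {y | t < ‖y‖} ≤ ENNReal.ofReal (hFn ν t) := by
  rw [ofReal_hFn hν]
  calc ν {y | t < ‖y‖} = ∫⁻ _ in {y | t < ‖y‖}, 1 ∂ν := (setLIntegral_one _).symm
    _ ≤ ∫⁻ x in {y | t < ‖y‖}, ENNReal.ofReal (min 1 (‖x‖ ^ 2 / t ^ 2)) ∂ν := by
        refine setLIntegral_mono' (measurableSet_lt measurable_const measurable_norm) ?_
        intro x (hx : t < ‖x‖)
        have : 1 ≤ ‖x‖ ^ 2 / t ^ 2 := (one_le_div (by positivity)).2 (by gcongr)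
        rw [min_eq_left this, ENNReal.ofReal_one]
    _ ≤ _ := setLIntegral_le_lintegral _ _

end hFn

theorem stmt2_general {d : ℕ} (ν : Measure (Rd d)) (hν : LevyMeasure ν)
    (α C θ₀ : ℝ) (hα : α ∈ Set.Ioc (0 : ℝ) 2) (hC : 0 < C) (hθ₀ : θ₀ ∈ Set.Ico (0 : ℝ) 1)
    (hh : ∀ lam : ℝ, 0 < lam → lam ≤ 1 → ∀ r : ℝ, 0 < r → θ₀ * r < 1 →
      hFn ν (lam * r) ≤ C * lam ^ (-α) * hFn ν r)
    (ε : ℝ) (hε : 0 < ε) :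
    (∫⁻ y in {y : Rd d | ‖y‖ < 1}, ENNReal.ofReal (‖y‖ ^ (α + ε)) ∂ν)
      ≤ ENNReal.ofReal (C * (α + ε) / ε * hFn ν 1) := by
  have htail : ∀ t, 0 < t → t < 1 → ν.restrict {y | ‖y‖ < 1} {y | t < ‖y‖} ≤
      ENNReal.ofReal (C * hFn ν 1 * t ^ (-α)) := by
    intro t ht ht1
    have hscale := hh t ht ht1.le 1 one_pos (by simpa using hθ₀.2)
    rw [mul_one, mul_right_comm] at hscale
    calc ν.restrict {y | ‖y‖ < 1} {y | t < ‖y‖} ≤ ν {y | t < ‖y‖} :=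
          Measure.restrict_apply_le _ _
      _ ≤ ENNReal.ofReal (hFn ν t) := meas_norm_gt_le_hFn hν.2 ht
      _ ≤ _ := ENNReal.ofReal_le_ofReal hscale
  have hball : ∀ᵐ y ∂ν.restrict {y : Rd d | ‖y‖ < 1}, ‖y‖ ≤ 1 :=
    ae_restrict_of_forall_mem (measurableSet_lt measurable_norm measurable_const) fun _ hy =>
      le_of_lt hy
  calc (∫⁻ y in {y : Rd d | ‖y‖ < 1}, ENNReal.ofReal (‖y‖ ^ (α + ε)) ∂ν)
      ≤ ENNReal.ofReal (C * hFn ν 1 * (α + ε) / ε) :=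
        lintegral_rpow_le_of_meas_lt_le (Eventually.of_forall fun _ => norm_nonneg _) hball
          measurable_norm.aemeasurable (mul_nonneg hC.le (hFn_nonneg ν 1)) hε
          (by linarith [hα.1]) htail
    _ = ENNReal.ofReal (C * (α + ε) / ε * hFn ν 1) := by ring_nf

/-- Under the scaling of `h`, for every `ε > 0`,
`∫_{|y|<1} |y|^{α+ε} ν(dy) ≤ C (α+ε) ε⁻¹ h(1) < ∞`. -/
theorem stmt2 {d : ℕ} (hd : 1 ≤ d) (ν : Measure (Rd d)) (hν : LevyMeasure ν)
    (α C θ₀ : ℝ) (hα : α ∈ Set.Ioc (0 : ℝ) 2) (hC : 0 < C) (hθ₀ : θ₀ ∈ Set.Ico (0 : ℝ) 1)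
    (hh : ∀ lam : ℝ, 0 < lam → lam ≤ 1 → ∀ r : ℝ, 0 < r → θ₀ * r < 1 →
      hFn ν (lam * r) ≤ C * lam ^ (-α) * hFn ν r)
    (ε : ℝ) (hε : 0 < ε) :
    (∫⁻ y in {y : Rd d | ‖y‖ < 1}, ENNReal.ofReal (‖y‖ ^ (α + ε)) ∂ν)
      ≤ ENNReal.ofReal (C * (α + ε) / ε * hFn ν 1) :=
  stmt2_general ν hν α C θ₀ hα hC hθ₀ hh ε hε
end
end
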